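/- arXiv:2203.12996 — 3 statements merged into one kernel-verified Lean document; each statement's English description precedes it below -/
import Mathlib

section
/- Let (X, μ) be a σ-finite measure space, α > 0, M > 0, and let φ, ū, u ∈ L²(μ) with |u(x)| ≤ M for μ-a.e. x. Suppose that ∫_X (φ + α·u + (u - ū))·(v - u) dμ ≥ 0 for every v ∈ L²(μ) with |v(x)| ≤ M μ-a.e. Then u(x) = P_M( -(φ(x) - ū(x))/(α + 1) ) for μ-a.e. x ∈ X. -/
/-!
Test the variational inequality with `v = w := P_M(g)`, where `g = -(φ - ū)/(α+1)`. Since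
`φ + α u + (u - ū) = (α+1)(u - g)` and the projection onto `[-M, M]` satisfies
`(g - w)(w - u) ≥ 0` whenever `|u| ≤ M`, the integrand is pointwise at most `-(α+1)(w - u)²`.
Hence `∫ (w - u)² ≤ 0`, so `u = w` a.e.
-/

open MeasureTheory

section Truncation

variable {a b t : ℝ}

theorem abs_min_max_sub_le (s : ℝ) (hat : a ≤ t) (htb : t ≤ b) :
    |min (max a s) b - t| ≤ |s - t| := by
  rcases le_total s a with hs | hs
  · rw [max_eq_left hs, min_eq_left (hat.trans htb), abs_sub_comm, abs_sub_comm s]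
    exact abs_le_abs_of_nonneg (by linarith) (by linarith)
  rcases le_total s b with hs' | hs'
  · rw [max_eq_right hs, min_eq_left hs']
  · rw [max_eq_right hs, min_eq_right hs']
    exact abs_le_abs_of_nonneg (by linarith) (by linarith)

theorem sub_min_max_mul_min_max_sub_nonneg (s : ℝ) (hat : a ≤ t) (htb : t ≤ b) :
    0 ≤ (s - min (max a s) b) * (min (max a s) b - t) := by
  rcases le_total s a with hs | hs
  · rw [max_eq_left hs, min_eq_left (hat.trans htb)]
    exact mul_nonneg_of_nonpos_of_nonpos (by linarith) (by linarith)
  rcases le_total s b with hs' | hs'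
  · simp [max_eq_right hs, min_eq_left hs']
  · rw [max_eq_right hs, min_eq_right hs']
    exact mul_nonneg (by linarith) (by linarith)

end Truncation

section Lp

variable {X : Type*} [MeasurableSpace X] {μ : Measure X}

theorem MeasureTheory.MemLp.min_max {p : ENNReal} {a b : ℝ} {f g : X → ℝ} (hf : MemLp f p μ)
    (hg : MemLp g p μ) (hg_mem : ∀ᵐ x ∂μ, g x ∈ Set.Icc a b) : MemLp (fun x => min (max a (f x)) b) p μ := by
  have hmeas : AEStronglyMeasurable (fun x => min (max a (f x)) b) μ :=
    ((continuous_const.max continuous_id).min continuous_const).comp_aestronglyMeasurable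
      hf.aestronglyMeasurable
  have hsub : MemLp (fun x => min (max a (f x)) b - g x) p μ :=
    (hf.sub hg).mono (hmeas.sub hg.aestronglyMeasurable) <| hg_mem.mono fun x hx => by
      simpa only [Real.norm_eq_abs, Pi.sub_apply] using abs_min_max_sub_le (f x) hx.1 hx.2
  simpa only [Pi.add_def, sub_add_cancel] using hsub.add hg

theorem ae_eq_of_integral_sq_sub_nonpos {f g : X → ℝ} (hfg : MemLp (f - g) 2 μ)
    (h : ∫ x, (f x - g x) ^ 2 ∂μ ≤ 0) : f =ᵐ[μ] g := by
  have hnn : 0 ≤ᵐ[μ] fun x => (f x - g x) ^ 2 := Filter.Eventually.of_forall fun x => sq_nonneg _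
  have hzero := (integral_eq_zero_iff_of_nonneg_ae hnn hfg.integrable_sq).mp
    (h.antisymm (integral_nonneg_of_ae hnn))
  filter_upwards [hzero] with x hx
  exact sub_eq_zero.mp (pow_eq_zero_iff two_ne_zero |>.mp hx)

end Lp

theorem stmt_7_general {X : Type*} [MeasurableSpace X] (μ : Measure X)
    (α M : ℝ) (hα : 0 < α)
    (φ ubar u : X → ℝ) (hφ : MemLp φ 2 μ) (hubar : MemLp ubar 2 μ) (hu : MemLp u 2 μ)
    (huM : ∀ᵐ x ∂μ, |u x| ≤ M)
    (hvi : ∀ v : X → ℝ, MemLp v 2 μ → (∀ᵐ x ∂μ, |v x| ≤ M) →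
      0 ≤ ∫ x, (φ x + α * u x + (u x - ubar x)) * (v x - u x) ∂μ) :
    ∀ᵐ x ∂μ, u x = min (max (-M) (-(φ x - ubar x) / (α + 1))) M := by
  set g : X → ℝ := fun x => -(φ x - ubar x) / (α + 1) with hg_def
  set w : X → ℝ := fun x => min (max (-M) (g x)) M
  have huIcc : ∀ᵐ x ∂μ, u x ∈ Set.Icc (-M) M := huM.mono fun x hx => abs_le.mp hx
  have hg : MemLp g 2 μ := (hφ.sub hubar).neg.mul_const (α + 1)⁻¹
  have hw : MemLp w 2 μ := hg.min_max hu huIcc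
  have hwM : ∀ᵐ x ∂μ, |w x| ≤ M := huIcc.mono fun x hx =>
    abs_le.mpr ⟨le_min (le_max_left _ _) (by linarith [hx.1, hx.2]), min_le_right _ _⟩
  have hpt : ∀ᵐ x ∂μ, (φ x + α * u x + (u x - ubar x)) * (w x - u x) ≤
      -((α + 1) * (w x - u x) ^ 2) := by
    filter_upwards [huIcc] with x hx
    have hproj := sub_min_max_mul_min_max_sub_nonneg (g x) hx.1 hx.2
    have hlin : φ x + α * u x + (u x - ubar x) = (α + 1) * (u x - g x) := by
      simp only [hg_def]; field_simp; ring
    rw [hlin]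
    nlinarith [mul_nonneg (by linarith : (0:ℝ) ≤ α + 1) hproj]
  have hint : 0 ≤ -((α + 1) * ∫ x, (w x - u x) ^ 2 ∂μ) := by
    rw [← integral_const_mul, ← integral_neg]
    exact (hvi w hw hwM).trans <| integral_mono_ae
      (((hφ.add (hu.const_mul α)).add (hu.sub hubar)).integrable_mul (hw.sub hu))
      ((hw.sub hu).integrable_sq.const_mul _).neg hpt
  have hsq : ∫ x, (w x - u x) ^ 2 ∂μ ≤ 0 := by nlinarith
  exact (ae_eq_of_integral_sq_sub_nonpos (hw.sub hu) hsq).mono fun x hx => hx.symm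

/-- From the integral variational inequality to the pointwise projection formula:
if `u ∈ L²(μ)` with `|u| ≤ M` a.e. satisfies
`∫ (φ + α u + (u - ū))(v - u) dμ ≥ 0` for every `v ∈ L²(μ)` with `|v| ≤ M` a.e.,
then `u = P_M(-(φ - ū)/(α+1))` a.e., where `P_M s = min (max (-M) s) M`. -/
theorem stmt_7 {X : Type*} [MeasurableSpace X] (μ : Measure X) [SigmaFinite μ]
    (α M : ℝ) (hα : 0 < α) (hM : 0 < M)
    (φ ubar u : X → ℝ) (hφ : MemLp φ 2 μ) (hubar : MemLp ubar 2 μ) (hu : MemLp u 2 μ)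
    (huM : ∀ᵐ x ∂μ, |u x| ≤ M)
    (hvi : ∀ v : X → ℝ, MemLp v 2 μ → (∀ᵐ x ∂μ, |v x| ≤ M) →
      0 ≤ ∫ x, (φ x + α * u x + (u x - ubar x)) * (v x - u x) ∂μ) :
    ∀ᵐ x ∂μ, u x = min (max (-M) (-(φ x - ubar x) / (α + 1))) M :=
  stmt_7_general μ α M hα φ ubar u hφ hubar hu huM hvi
end

section
/- Let H be a real Hilbert space, J : H → ℝ, ū ∈ H and ρ > 0 with J(ū) ≤ J(u) for all u with ‖u - ū‖ ≤ ρ. Assume J is weakly sequentially lower semicontinuous: whenever ⟨v_k, w⟩ → ⟨v, w⟩ for all w ∈ H, one has J(v) ≤ liminf J(v_k). Let (ū_k) and (u_k) be sequences in H such that: ū_k → ū in norm, J(ū_k) → J(ū), ‖u_k - ū‖ ≤ ρ for all k, J(u_k) + (1/2)‖u_k - ū‖² ≤ J(ū_k) + (1/2)‖ū_k - ū‖² for all k, and u_k converges weakly to some u* ∈ H (i.e. ⟨u_k, w⟩ → ⟨u*, w⟩ for all w). Then u* = ū and ‖u_k - ū‖ → 0. -/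
open Filter Topology

/-!
Since `uₖ` lies in the ball where `ū` is a minimizer, `J ū ≤ J uₖ`, so the comparison
inequality gives `½‖uₖ - ū‖² ≤ J ūₖ + ½‖ūₖ - ū‖² - J ū`, and the right-hand side tends to `0`.
Hence `uₖ → ū` in norm, and the weak limit `u*` must coincide with the strong limit `ū`.
-/

theorem tendsto_sq_nhds_zero_of_add_half_sq_le {α : Type*} {l : Filter α} {f a d : α → ℝ}
    {c : ℝ} (hf : ∀ k, c ≤ f k) (hle : ∀ k, f k + 1 / 2 * d k ^ 2 ≤ a k)
    (ha : Tendsto a l (𝓝 c)) : Tendsto (fun k => d k ^ 2) l (𝓝 0) := by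
  have hgap : Tendsto (fun k => 2 * (a k - c)) l (𝓝 0) := by
    simpa using (ha.sub_const c).const_mul 2
  refine squeeze_zero (fun k => sq_nonneg (d k)) (fun k => ?_) hgap
  linarith [hf k, hle k]

theorem tendsto_nhds_zero_of_sq {α : Type*} {l : Filter α} {d : α → ℝ} (hd : ∀ k, 0 ≤ d k)
    (hsq : Tendsto (fun k => d k ^ 2) l (𝓝 0)) : Tendsto d l (𝓝 0) := by
  simpa [Real.sqrt_sq (hd _)] using hsq.sqrt

theorem eq_of_tendsto_inner_of_tendsto {E : Type*} [NormedAddCommGroup E]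
    [InnerProductSpace ℝ E] {α : Type*} {l : Filter α} [l.NeBot] {u : α → E} {x y : E}
    (hweak : ∀ w : E, Tendsto (fun k => inner ℝ (u k) w) l (𝓝 (inner ℝ y w)))
    (hstrong : Tendsto u l (𝓝 x)) : y = x :=
  ext_inner_right ℝ fun w =>
    tendsto_nhds_unique (hweak w) (hstrong.inner tendsto_const_nhds)

theorem stmt_8_general {H : Type*} [NormedAddCommGroup H] [InnerProductSpace ℝ H]
    (J : H → ℝ) (ubar : H) (ρ : ℝ)
    (hloc : ∀ u : H, ‖u - ubar‖ ≤ ρ → J ubar ≤ J u)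
    (ubark uk : ℕ → H) (ustar : H)
    (h1 : Tendsto ubark atTop (nhds ubar))
    (h2 : Tendsto (fun k => J (ubark k)) atTop (nhds (J ubar)))
    (h3 : ∀ k, ‖uk k - ubar‖ ≤ ρ)
    (h4 : ∀ k, J (uk k) + (1 / 2) * ‖uk k - ubar‖ ^ 2 ≤
      J (ubark k) + (1 / 2) * ‖ubark k - ubar‖ ^ 2)
    (h5 : ∀ w : H, Tendsto (fun k => (inner ℝ (uk k) w : ℝ)) atTop (nhds (inner ℝ ustar w))) :
    ustar = ubar ∧ Tendsto (fun k => ‖uk k - ubar‖) atTop (nhds 0) := by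
  have hbound : Tendsto (fun k => J (ubark k) + 1 / 2 * ‖ubark k - ubar‖ ^ 2) atTop
      (𝓝 (J ubar)) := by
    convert h2.add (((tendsto_iff_norm_sub_tendsto_zero.mp h1).pow 2).const_mul (1 / 2)) using 2
    norm_num
  have hdist : Tendsto (fun k => ‖uk k - ubar‖) atTop (𝓝 0) :=
    tendsto_nhds_zero_of_sq (fun k => norm_nonneg _)
      (tendsto_sq_nhds_zero_of_add_half_sq_le (fun k => hloc _ (h3 k)) h4 hbound)
  exact ⟨eq_of_tendsto_inner_of_tendsto h5 (tendsto_iff_norm_sub_tendsto_zero.mpr hdist), hdist⟩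

/-- Abstract version of Lemma 3.1: in a real Hilbert space, if `ū` minimizes the weakly
sequentially l.s.c. functional `J` on the closed ball of radius `ρ`, `ū_k → ū` strongly with
`J(ū_k) → J(ū)`, and `u_k` lies in the ball, satisfies the penalized comparison inequality
and converges weakly to `u*`, then `u* = ū` and `u_k → ū` strongly. -/
theorem stmt_8 {H : Type*} [NormedAddCommGroup H] [InnerProductSpace ℝ H]
    (J : H → ℝ) (ubar : H) (ρ : ℝ) (hρ : 0 < ρ)
    (hloc : ∀ u : H, ‖u - ubar‖ ≤ ρ → J ubar ≤ J u)
    (hlsc : ∀ (v : ℕ → H) (vlim : H),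
      (∀ w : H, Tendsto (fun k => (inner ℝ (v k) w : ℝ)) atTop (nhds (inner ℝ vlim w))) →
      J vlim ≤ Filter.liminf (fun k => J (v k)) atTop)
    (ubark uk : ℕ → H) (ustar : H)
    (h1 : Tendsto ubark atTop (nhds ubar))
    (h2 : Tendsto (fun k => J (ubark k)) atTop (nhds (J ubar)))
    (h3 : ∀ k, ‖uk k - ubar‖ ≤ ρ)
    (h4 : ∀ k, J (uk k) + (1 / 2) * ‖uk k - ubar‖ ^ 2 ≤
      J (ubark k) + (1 / 2) * ‖ubark k - ubar‖ ^ 2)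
    (h5 : ∀ w : H, Tendsto (fun k => (inner ℝ (uk k) w : ℝ)) atTop (nhds (inner ℝ ustar w))) :
    ustar = ubar ∧ Tendsto (fun k => ‖uk k - ubar‖) atTop (nhds 0) :=
  stmt_8_general J ubar ρ hloc ubark uk ustar h1 h2 h3 h4 h5
end

section
/- Let n ≥ 1 and let φ : ℝⁿ × ℝ → ℝ satisfy 0 ≤ φ(z, τ) ≤ 1 for all (z, τ) and φ(z, τ) = 1 whenever |z| ≤ 1 and |τ| ≤ 1. Define y : ℝⁿ × ℝ → [0, ∞] by y(x, t) = Σ_{k=1}^∞ (1/k)·φ(2^k x, 2^{2k}(t - 1)). Then for every m ≥ 1 and every (x, t) with |x| ≤ 2^{-m} and |t - 1| ≤ 2^{-2m}, one has y(x, t) ≥ Σ_{k=1}^m 1/k. Consequently y is not essentially bounded on B_2(0) × (0, 2) with respect to Lebesgue measure: for every R > 0 the set {(x,t) ∈ B_2(0) × (0,2) : y(x,t) > R} has positive measure. -/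
open scoped ENNReal
open MeasureTheory

lemma harmonic_eq (m : ℕ) :
    ∑ i ∈ Finset.range m, (1:ℝ)/(i+1) = ∑ k ∈ Finset.Icc 1 m, (1:ℝ)/k := by
  induction m with
  | zero => simp
  | succ m ih => rw [Finset.sum_range_succ, ih, Finset.sum_Icc_succ_top (by omega)]; push_cast; ring

/-- Unboundedness of the counterexample of Section 2.2: with
`y(x,t) = Σ_{k≥1} (1/k) φ(2^k x, 2^{2k}(t-1))` and `φ ∈ [0,1]` equal to `1` on the unit
parabolic cylinder, `y ≥ Σ_{k=1}^m 1/k` on `B_{2^{-m}}(0) × [1-2^{-2m}, 1+2^{-2m}]`, and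
for every `R > 0` the set `{(x,t) ∈ B_2(0) × (0,2) : y(x,t) > R}` has positive measure. -/
theorem stmt_10 (n : ℕ) (hn : 1 ≤ n)
    (φ : EuclideanSpace ℝ (Fin n) × ℝ → ℝ)
    (hφ01 : ∀ z τ, φ (z, τ) ∈ Set.Icc (0 : ℝ) 1)
    (hφ1 : ∀ z τ, ‖z‖ ≤ 1 → |τ| ≤ 1 → φ (z, τ) = 1)
    (y : EuclideanSpace ℝ (Fin n) × ℝ → ℝ≥0∞)
    (hy : ∀ x t, y (x, t) =
      ∑' k : ℕ+, ENNReal.ofReal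
        ((1 / (k : ℝ)) * φ (((2 : ℝ) ^ (k : ℕ)) • x, (2 : ℝ) ^ (2 * (k : ℕ)) * (t - 1)))) :
    (∀ m : ℕ, 1 ≤ m → ∀ x t, ‖x‖ ≤ (2 : ℝ) ^ (-(m : ℤ)) → |t - 1| ≤ (2 : ℝ) ^ (-(2 * m : ℤ)) →
      ENNReal.ofReal (∑ k ∈ Finset.Icc 1 m, (1 : ℝ) / k) ≤ y (x, t)) ∧
    (∀ R : ℝ, 0 < R →
      0 < volume {p : EuclideanSpace ℝ (Fin n) × ℝ |
        ‖p.1‖ < 2 ∧ p.2 ∈ Set.Ioo (0 : ℝ) 2 ∧ ENNReal.ofReal R < y p}) := by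
  have key : ∀ m : ℕ, 1 ≤ m → ∀ x t, ‖x‖ ≤ (2 : ℝ) ^ (-(m : ℤ)) →
      |t - 1| ≤ (2 : ℝ) ^ (-(2 * m : ℤ)) →
      ENNReal.ofReal (∑ k ∈ Finset.Icc 1 m, (1 : ℝ) / k) ≤ y (x, t) := by
    intro m hm x t hx ht
    rw [hy]
    set f : ℕ+ → ℝ≥0∞ := fun k => ENNReal.ofReal
        ((1 / (k : ℝ)) * φ (((2 : ℝ) ^ (k : ℕ)) • x, (2 : ℝ) ^ (2 * (k : ℕ)) * (t - 1))) with hf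
    have hφeq : ∀ k : ℕ+, (k : ℕ) ≤ m → f k = ENNReal.ofReal (1 / (k : ℝ)) := by
      intro k hk
      have h1 : ‖((2 : ℝ) ^ (k : ℕ)) • x‖ ≤ 1 := by
        rw [norm_smul]
        have : ‖(2:ℝ) ^ (k:ℕ)‖ * ‖x‖ ≤ (2:ℝ) ^ (k:ℕ) * (2:ℝ) ^ (-(m:ℤ)) := by
          apply mul_le_mul_of_nonneg_left hx (by positivity) |>.trans_eq' ?_
          rw [Real.norm_of_nonneg (by positivity)]
        refine this.trans ?_
        rw [← zpow_natCast (2:ℝ) (k:ℕ), ← zpow_add₀ (by norm_num : (2:ℝ) ≠ 0)]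
        calc (2:ℝ) ^ ((k:ℕ) + -(m:ℤ)) ≤ (2:ℝ) ^ (0:ℤ) := by
              apply zpow_le_zpow_right₀ (by norm_num)
              omega
          _ = 1 := by norm_num
      have h2 : |(2 : ℝ) ^ (2 * (k : ℕ)) * (t - 1)| ≤ 1 := by
        rw [abs_mul, abs_of_nonneg (by positivity : (0:ℝ) ≤ (2:ℝ) ^ (2*(k:ℕ)))]
        have : (2:ℝ) ^ (2*(k:ℕ)) * |t - 1| ≤ (2:ℝ) ^ (2*(k:ℕ)) * (2:ℝ) ^ (-(2*m:ℤ)) :=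
          mul_le_mul_of_nonneg_left ht (by positivity)
        refine this.trans ?_
        rw [← zpow_natCast (2:ℝ) (2*(k:ℕ)), ← zpow_add₀ (by norm_num : (2:ℝ) ≠ 0)]
        calc (2:ℝ) ^ ((2*(k:ℕ):ℕ) + -(2*m:ℤ)) ≤ (2:ℝ) ^ (0:ℤ) := by
              apply zpow_le_zpow_right₀ (by norm_num)
              push_cast; omega
          _ = 1 := by norm_num
      rw [hf]
      simp only [hφ1 _ _ h1 h2, mul_one]
    have hM : (0 : ℕ) < m := hm
    set M : ℕ+ := ⟨m, hM⟩ with hMdef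
    have step1 : ∑ k ∈ Finset.Icc (1:ℕ+) M, f k
        = ∑ k ∈ Finset.Icc 1 m, ENNReal.ofReal ((1:ℝ) / k) := by
      refine Finset.sum_nbij' (fun (k:ℕ+) => (k:ℕ)) (fun k => ⟨max k 1, by omega⟩) ?_ ?_ ?_ ?_ ?_
      · intro a ha
        simp only [Finset.mem_Icc] at ha ⊢
        exact ⟨a.one_le, ha.2⟩
      · intro a ha
        simp only [Finset.mem_Icc] at ha
        refine Finset.mem_Icc.mpr ⟨PNat.one_le _, ?_⟩
        change max a 1 ≤ m
        omega
      · intro a _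
        apply PNat.coe_injective
        have := a.pos
        simp only [PNat.mk_coe]
        omega
      · intro a ha
        simp only [Finset.mem_Icc] at ha
        simp only [PNat.mk_coe]
        omega
      · intro a ha
        simp only [Finset.mem_Icc] at ha
        have hle : (a:ℕ) ≤ m := ha.2
        rw [hφeq a hle]
    rw [ENNReal.ofReal_sum_of_nonneg (by intro i _; positivity), ← step1]
    exact ENNReal.sum_le_tsum _
  refine ⟨key, ?_⟩
  intro R hR
  obtain ⟨m, hm1, hmR⟩ : ∃ m : ℕ, 1 ≤ m ∧ R < ∑ k ∈ Finset.Icc 1 m, (1:ℝ)/k := by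
    have h := Real.tendsto_sum_range_one_div_nat_succ_atTop
    rw [Filter.tendsto_atTop] at h
    obtain ⟨N, hN⟩ := (h (R+1)).exists
    refine ⟨max N 1, le_max_right _ _, ?_⟩
    have h1 : R + 1 ≤ ∑ i ∈ Finset.range N, (1:ℝ)/(i+1) := hN
    have h2 : ∑ i ∈ Finset.range N, (1:ℝ)/(i+1) ≤ ∑ i ∈ Finset.range (max N 1), (1:ℝ)/(i+1) := by
      apply Finset.sum_le_sum_of_subset_of_nonneg
      · exact Finset.range_subset_range.mpr (le_max_left _ _)
      · intro i _ _; positivity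
    rw [← harmonic_eq]
    linarith
  set A : Set (EuclideanSpace ℝ (Fin n) × ℝ) :=
      (Metric.closedBall (0 : EuclideanSpace ℝ (Fin n)) ((2:ℝ) ^ (-(m:ℤ)))) ×ˢ
      (Set.Icc (1 - (2:ℝ) ^ (-(2*m:ℤ))) (1 + (2:ℝ) ^ (-(2*m:ℤ)))) with hA
  have hsub : A ⊆ {p : EuclideanSpace ℝ (Fin n) × ℝ |
      ‖p.1‖ < 2 ∧ p.2 ∈ Set.Ioo (0 : ℝ) 2 ∧ ENNReal.ofReal R < y p} := by
    rintro ⟨x, t⟩ ⟨hx, ht⟩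
    have hxn : ‖x‖ ≤ (2:ℝ) ^ (-(m:ℤ)) := by simpa using mem_closedBall_zero_iff.mp hx
    have htabs : |t - 1| ≤ (2:ℝ) ^ (-(2*m:ℤ)) := abs_sub_le_iff.mpr ⟨by linarith [ht.2], by linarith [ht.1]⟩
    have hsmall : (2:ℝ) ^ (-(m:ℤ)) ≤ 1/2 := by
      calc (2:ℝ) ^ (-(m:ℤ)) ≤ (2:ℝ) ^ (-1:ℤ) := by
            apply zpow_le_zpow_right₀ (by norm_num); omega
        _ = 1/2 := by norm_num
    have hsmall2 : (2:ℝ) ^ (-(2*m:ℤ)) ≤ 1/2 := by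
      calc (2:ℝ) ^ (-(2*m:ℤ)) ≤ (2:ℝ) ^ (-1:ℤ) := by
            apply zpow_le_zpow_right₀ (by norm_num); omega
        _ = 1/2 := by norm_num
    refine ⟨by simp only; linarith, ⟨by linarith [ht.1], by linarith [ht.2]⟩, ?_⟩
    calc ENNReal.ofReal R < ENNReal.ofReal (∑ k ∈ Finset.Icc 1 m, (1:ℝ)/k) := by
          exact (ENNReal.ofReal_lt_ofReal_iff (lt_trans hR hmR)).mpr hmR
      _ ≤ y (x, t) := key m hm1 x t hxn htabs
  refine lt_of_lt_of_le ?_ (measure_mono hsub)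
  rw [hA, show (volume : Measure (EuclideanSpace ℝ (Fin n) × ℝ))
      = (volume : Measure (EuclideanSpace ℝ (Fin n))).prod volume from rfl,
    Measure.prod_prod]
  apply ENNReal.mul_pos
  · refine ne_of_gt (lt_of_lt_of_le (Metric.measure_ball_pos volume 0 (by positivity)) (measure_mono Metric.ball_subset_closedBall))
  · rw [Real.volume_Icc]
    simp only [ne_eq, ENNReal.ofReal_eq_zero, not_le]
    have : (0:ℝ) < (2:ℝ) ^ (-(2*m:ℤ)) := by positivity
    linarith
end
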